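/- Let $t > \tfrac13 n^2 + \tfrac{44}{9} n$ and let $\mathcal{F}$ be a collection of $n$ independent $n$-sets of the cycle $C_t$ with no rainbow independent $n$-set. Fix $J \in \mathcal{F}$ and let $R$ be a rainbow independent $(n-1)$-set of $\mathcal{F}\setminus\{J\}$ chosen to minimize $|R \cap N_{C_t}[J]|$. Then $|R \cap N_{C_t}[J]| \ge \lceil n/2 \rceil$. -/
import Mathlib

open Finset

/-- A set of vertices is independent: no two of its members are adjacent. -/
def IsIndep {V : Type*} (G : SimpleGraph V) (S : Set V) : Prop :=
  ∀ a ∈ S, ∀ b ∈ S, ¬ G.Adj a b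

/-- `(F, G)` admits a rainbow independent `m`-set: `m` distinct vertices chosen
from `m` distinct members of `F` (one vertex per member) forming an independent set. -/
def RainbowIndep {V : Type*} [DecidableEq V] (G : SimpleGraph V) {k : ℕ}
    (F : Fin k → Finset V) (m : ℕ) : Prop :=
  ∃ (s : Finset (Fin k)) (x : Fin k → V),
    s.card = m ∧ (∀ i ∈ s, x i ∈ F i) ∧ (s.image x).card = m ∧
    IsIndep G (s.image x : Set V)

/-- The cycle `C_t` with vertex set `ZMod t`, consecutive residues adjacent. -/
def cyc (t : ℕ) : SimpleGraph (ZMod t) :=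
  SimpleGraph.fromRel (fun a b => b = a + 1)

/-- `R` is a rainbow independent set of the subcollection of `F` indexed by
`allowed`: each vertex of `R` gets a distinct color from `allowed` whose set
contains it, and `R` is independent. -/
def IsRainbowSet {V : Type*} [DecidableEq V] (G : SimpleGraph V) {k : ℕ}
    (F : Fin k → Finset V) (allowed : Finset (Fin k)) (R : Finset V) : Prop :=
  ∃ f : V → Fin k, Set.InjOn f (R : Set V) ∧
    (∀ v ∈ R, f v ∈ allowed ∧ v ∈ F (f v)) ∧ IsIndep G (R : Set V)

/-- The closed neighborhood of a vertex set. -/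
def closedNbhd {V : Type*} (G : SimpleGraph V) (J : Finset V) : Set V :=
  ↑J ∪ {v | ∃ u ∈ J, G.Adj u v}


private lemma cyc_adj {t : ℕ} {a b : ZMod t} :
    (cyc t).Adj a b ↔ a ≠ b ∧ (b = a + 1 ∨ a = b + 1) := by
  simp [cyc, SimpleGraph.fromRel_adj]

private lemma extend_rainbow {n t : ℕ} (hn : 1 ≤ n) (j : Fin n)
    (F : Fin n → Finset (ZMod t)) (R : Finset (ZMod t)) (f : ZMod t → Fin n)
    (hinj : Set.InjOn f (R : Set (ZMod t)))
    (hmem : ∀ v ∈ R, f v ∈ ({j}ᶜ : Finset (Fin n)) ∧ v ∈ F (f v))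
    (hindep : IsIndep (cyc t) (R : Set (ZMod t))) (hcard : R.card = n - 1)
    (v : ZMod t) (hv : v ∈ F j) (hvR : v ∉ R)
    (hadj : ∀ r ∈ R, ¬ (cyc t).Adj v r) :
    RainbowIndep (cyc t) F n := by
  classical
  set S : Finset (ZMod t) := insert v R with hS
  have hScard : S.card = n := by
    rw [hS, Finset.card_insert_of_notMem hvR, hcard]; omega
  set g : ZMod t → Fin n := fun u => if u = v then j else f u with hg
  have hfne : ∀ b ∈ R, f b ≠ j := by
    intro b hb
    have := (hmem b hb).1
    simpa using this
  have hginj : Set.InjOn g (S : Set (ZMod t)) := by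
    intro a ha b hb hab
    have ha' : a ∈ S := ha
    have hb' : b ∈ S := hb
    rw [hS, Finset.mem_insert] at ha' hb'
    by_cases hav : a = v <;> by_cases hbv : b = v
    · rw [hav, hbv]
    · exfalso
      have hbR : b ∈ R := hb'.resolve_left hbv
      rw [hg] at hab; simp only [hav, if_pos rfl, if_neg hbv] at hab
      exact hfne b hbR hab.symm
    · exfalso
      have haR : a ∈ R := ha'.resolve_left hav
      rw [hg] at hab; simp only [hbv, if_pos rfl, if_neg hav] at hab
      exact hfne a haR hab
    · have haR : a ∈ R := ha'.resolve_left hav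
      have hbR : b ∈ R := hb'.resolve_left hbv
      rw [hg] at hab; simp only [if_neg hav, if_neg hbv] at hab
      exact hinj haR hbR hab
  have himg : S.image g = Finset.univ := by
    apply Finset.eq_univ_of_card
    rw [Finset.card_image_of_injOn hginj, hScard, Fintype.card_fin]
  have hex : ∀ i : Fin n, ∃ u, u ∈ S ∧ g u = i := by
    intro i
    have : i ∈ S.image g := by rw [himg]; exact Finset.mem_univ i
    exact Finset.mem_image.mp this
  set x : Fin n → ZMod t := fun i => (hex i).choose with hxdef
  have hx : ∀ i, x i ∈ S ∧ g (x i) = i := fun i => (hex i).choose_spec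
  have himgx : Finset.univ.image x = S := by
    apply Finset.Subset.antisymm
    · intro u hu
      rcases Finset.mem_image.mp hu with ⟨i, _, hi⟩
      rw [← hi]; exact (hx i).1
    · intro u hu
      refine Finset.mem_image.mpr ⟨g u, Finset.mem_univ _, ?_⟩
      exact hginj (hx (g u)).1 hu (hx (g u)).2
  have hSindep : IsIndep (cyc t) (S : Set (ZMod t)) := by
    intro a ha b hb hab
    have ha' : a ∈ S := ha
    have hb' : b ∈ S := hb
    rw [hS, Finset.mem_insert] at ha' hb'
    rcases ha' with rfl | haR <;> rcases hb' with rfl | hbR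
    · exact (cyc t).irrefl hab
    · exact hadj b hbR hab
    · exact hadj a haR hab.symm
    · exact hindep a haR b hbR hab
  refine ⟨Finset.univ, x, ?_, ?_, ?_, ?_⟩
  · rw [Finset.card_univ, Fintype.card_fin]
  · intro i _
    have h1 := (hx i).1
    have h2 := (hx i).2
    rw [hS, Finset.mem_insert] at h1
    rcases h1 with h1 | h1
    · rw [hg, h1] at h2
      simp only [if_pos rfl] at h2
      rw [h1, ← h2]; exact hv
    · have hne : x i ≠ v := fun h => hvR (h ▸ h1)
      rw [hg] at h2; simp only [if_neg hne] at h2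
      have := (hmem _ h1).2
      rwa [h2] at this
  · rw [himgx]; exact hScard
  · rw [himgx]; exact hSindep

/-- In the proof of Theorem 4: for `t > n²/3 + 44n/9`, if `n` independent
`n`-sets of `C_t` have no rainbow independent `n`-set, `J = F j`, and `R` is a
rainbow independent `(n-1)`-set of `𝓕 ∖ {J}` minimizing `|R ∩ N[J]|`, then
`|R ∩ N[J]| ≥ ⌈n/2⌉`. -/
theorem stmt16 (n t : ℕ) (hn : 1 ≤ n) (ht : 3 * n ^ 2 + 44 * n < 9 * t)
    (F : Fin n → Finset (ZMod t))
    (hF : ∀ i, (F i).card = n ∧ IsIndep (cyc t) (F i : Set (ZMod t)))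
    (hno : ¬ RainbowIndep (cyc t) F n)
    (j : Fin n) (R : Finset (ZMod t))
    (hR : IsRainbowSet (cyc t) F {j}ᶜ R) (hcard : R.card = n - 1)
    (hmin : ∀ R' : Finset (ZMod t),
      IsRainbowSet (cyc t) F {j}ᶜ R' → R'.card = n - 1 →
      ((R : Set (ZMod t)) ∩ closedNbhd (cyc t) (F j)).ncard ≤
        ((R' : Set (ZMod t)) ∩ closedNbhd (cyc t) (F j)).ncard) :
    n ≤ 2 * ((R : Set (ZMod t)) ∩ closedNbhd (cyc t) (F j)).ncard := by
  classical
  obtain ⟨f, hinj, hmem, hindep⟩ := hR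
  have hone : (1 : ZMod t) ≠ 0 := by
    have ht6 : 1 < t := by nlinarith
    intro h
    have := congrArg ZMod.val h
    rw [ZMod.val_one_eq_one_mod] at this
    simp [Nat.mod_eq_of_lt ht6] at this
  -- every vertex of J = F j is covered by R
  have hcover : ∀ v ∈ F j, ∃ r ∈ R, v = r ∨ (cyc t).Adj v r := by
    intro v hv
    by_contra hcon
    push_neg at hcon
    have hvR : v ∉ R := fun h => (hcon v h).1 rfl
    have hadj : ∀ r ∈ R, ¬ (cyc t).Adj v r := fun r hr => (hcon r hr).2
    exact hno (extend_rainbow hn j F R f hinj hmem hindep hcard v hv hvR hadj)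
  set φ : ZMod t → ZMod t := fun v =>
    if h : ∃ r ∈ R, v = r ∨ (cyc t).Adj v r then h.choose else v with hφ
  have hφspec : ∀ v ∈ F j, φ v ∈ R ∧ (v = φ v ∨ (cyc t).Adj v (φ v)) := by
    intro v hv
    have h := hcover v hv
    rw [hφ]; simp only [dif_pos h]
    exact h.choose_spec
  set T : Finset (ZMod t) :=
    R.filter (fun r => r ∈ closedNbhd (cyc t) (F j)) with hT
  have hset : (R : Set (ZMod t)) ∩ closedNbhd (cyc t) (F j) = (T : Set (ZMod t)) := by
    ext u
    simp [hT, Finset.mem_filter, Set.mem_inter_iff]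
  have himsub : (F j).image φ ⊆ T := by
    intro u hu
    rcases Finset.mem_image.mp hu with ⟨v, hv, hvu⟩
    obtain ⟨hR1, hR2⟩ := hφspec v hv
    rw [hT, Finset.mem_filter]
    refine ⟨hvu ▸ hR1, ?_⟩
    rcases hR2 with h | h
    · left; rw [← hvu, ← h]; exact hv
    · right; exact ⟨v, hv, hvu ▸ h⟩
  have hfiber : ∀ r ∈ (F j).image φ,
      ((F j).filter (fun v => φ v = r)).card ≤ 2 := by
    intro r _
    by_contra hc
    push_neg at hc
    set s := (F j).filter (fun v => φ v = r) with hs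
    have hsub : s ⊆ {r - 1, r, r + 1} := by
      intro v hvs
      rw [hs, Finset.mem_filter] at hvs
      obtain ⟨hvJ, hvr⟩ := hvs
      obtain ⟨_, h2⟩ := hφspec v hvJ
      rw [hvr] at h2
      rcases h2 with h | h
      · simp [h]
      · rw [cyc_adj] at h
        rcases h.2 with h | h
        · have hv1 : v = r - 1 := by rw [h]; ring
          simp [hv1]
        · simp [h]
    have hcard3 : ({r - 1, r, r + 1} : Finset (ZMod t)).card ≤ 3 := by
      apply le_trans (Finset.card_insert_le _ _)
      apply Nat.succ_le_succ
      apply le_trans (Finset.card_insert_le _ _)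
      simp
    have heq : s = ({r - 1, r, r + 1} : Finset (ZMod t)) :=
      Finset.eq_of_subset_of_card_le hsub (hcard3.trans (by omega))
    have hrs : r ∈ s := by rw [heq]; simp
    have hr1s : r + 1 ∈ s := by rw [heq]; simp
    have hrJ : r ∈ F j := (Finset.filter_subset _ _) hrs
    have hr1J : r + 1 ∈ F j := (Finset.filter_subset _ _) hr1s
    have hadj : (cyc t).Adj r (r + 1) := by
      rw [cyc_adj]
      constructor
      · intro h
        exact hone (by linear_combination -h)
      · left; rfl
    exact (hF j).2 r hrJ (r + 1) hr1J hadj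
  have hbound : (F j).card ≤ 2 * ((F j).image φ).card :=
    Finset.card_le_mul_card_image _ 2 hfiber
  have hTcard : ((F j).image φ).card ≤ T.card := Finset.card_le_card himsub
  rw [hset, Set.ncard_coe_finset]
  calc n = (F j).card := ((hF j).1).symm
    _ ≤ 2 * ((F j).image φ).card := hbound
    _ ≤ 2 * T.card := by omega
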